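/- Let * be a continuous t-norm and let φ, ψ, ξ be distance distributions. With (φ ⇒ ξ)(t) = sup_{s<t} inf_{q>0} (φ(q) →* ξ(q+s)), it holds that (ψ ⊗ (φ ⇒ ξ))(t) = sup_{s<t} inf_{q>0} ψ(t−s) * (φ(q) →* ξ(q+s)) for every t ∈ [0,∞) (i.e., for every finite t). -/

import Mathlib

open unitInterval
open scoped ENNReal

noncomputable section

instance : Fact ((0:ℝ) ≤ 1) := ⟨zero_le_one⟩

/-- A distance distribution: a map `φ : [0,∞] → [0,1]` with `φ t = ⨆ s < t, φ s`. -/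
def DistDistr (φ : ℝ≥0∞ → I) : Prop :=
  ∀ t, φ t = ⨆ (s : ℝ≥0∞) (_ : s < t), φ s

/-- The one-step function `κ_{p,a}`. -/
def kappa (p : ℝ≥0∞) (a : I) : ℝ≥0∞ → I :=
  fun t => if t ≤ p then 0 else a

/-- A continuous t-norm on `[0,1]`. -/
structure ContinuousTNorm where
  mul : I → I → I
  continuous' : Continuous fun p : I × I => mul p.1 p.2
  comm : ∀ a b, mul a b = mul b a
  assoc : ∀ a b c, mul (mul a b) c = mul a (mul b c)
  mono : ∀ a, Monotone (mul a)
  mul_one : ∀ a, mul a 1 = a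

/-- The residual `a →* b` of a continuous t-norm. -/
def ContinuousTNorm.residual (T : ContinuousTNorm) (a b : I) : I :=
  sSup {c | T.mul a c ≤ b}

/-- Convolution of maps `[0,∞] → [0,1]` w.r.t. a continuous t-norm. -/
def conv (T : ContinuousTNorm) (φ ψ : ℝ≥0∞ → I) : ℝ≥0∞ → I :=
  fun t => ⨆ (r : ℝ≥0∞) (s : ℝ≥0∞) (_ : r + s = t), T.mul (φ r) (ψ s)

/-- `φ⁻ t = ⨆ s < t, φ s`. -/
def lower (φ : ℝ≥0∞ → I) : ℝ≥0∞ → I :=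
  fun t => ⨆ (s : ℝ≥0∞) (_ : s < t), φ s

/-! Left multiplication by `a` under a continuous t-norm is monotone and continuous, hence commutes
with all suprema and with nonempty infima; this moves `ψ (t - s)` inside `⨅ q > 0`. What remains is
`(ψ ⊗ G⁻) t = ⨆ s < t, ψ (t - s) * G s` for arbitrary `G`: the inequality `≤` is monotonicity of
`ψ`, and for `≥` one writes `ψ (t - s) = ⨆ u < t - s, ψ u` and splits `t = u + (t - u)` with
`s < t - u`. -/

namespace ContinuousTNorm

variable (T : ContinuousTNorm)

lemma mul_zero (a : I) : T.mul a 0 = 0 :=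
  le_antisymm ((T.comm a 0).trans_le ((T.mono 0 le_one').trans_eq (T.mul_one 0))) bot_le

lemma monotone_mul_left (b : I) : Monotone fun a => T.mul a b := fun a a' h => by
  simpa only [T.comm _ b] using T.mono b h

lemma continuous_mul_right (a : I) : Continuous (T.mul a) :=
  T.continuous'.comp (Continuous.prodMk_right a)

lemma mul_iSup {ι : Sort*} (a : I) (f : ι → I) :
    T.mul a (⨆ i, f i) = ⨆ i, T.mul a (f i) :=
  (T.mono a).map_iSup_of_continuousAt (T.continuous_mul_right a).continuousAt (T.mul_zero a)

lemma mul_iInf {ι : Sort*} [Nonempty ι] (a : I) (f : ι → I) :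
    T.mul a (⨅ i, f i) = ⨅ i, T.mul a (f i) :=
  (T.mono a).map_ciInf_of_continuousAt (T.continuous_mul_right a).continuousAt
    (OrderBot.bddBelow _)

lemma mul_iInf₂ {ι : Type*} {p : ι → Prop} (hp : ∃ i, p i) (a : I) (f : ι → I) :
    T.mul a (⨅ (i) (_ : p i), f i) = ⨅ (i) (_ : p i), T.mul a (f i) := by
  have : Nonempty {i // p i} := hp.elim fun i hi => ⟨⟨i, hi⟩⟩
  rw [iInf_subtype', iInf_subtype', T.mul_iInf]

end ContinuousTNorm

lemma DistDistr.monotone {φ : ℝ≥0∞ → I} (hφ : DistDistr φ) : Monotone φ := by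
  intro a b hab
  rcases hab.eq_or_lt with rfl | hlt
  · exact le_rfl
  · exact (hφ b).symm ▸ le_iSup₂ (f := fun s (_ : s < b) => φ s) a hlt

section conv_lower

variable (T : ContinuousTNorm) {ψ : ℝ≥0∞ → I} (G : ℝ≥0∞ → I) (t : ℝ≥0∞)

lemma conv_lower_le (hψ : Monotone ψ) :
    conv T ψ (lower G) t ≤ ⨆ (s) (_ : s < t), T.mul (ψ (t - s)) (G s) := by
  refine iSup_le fun r => iSup₂_le fun s hrs => ?_
  simp only [lower, T.mul_iSup]
  refine iSup₂_le fun (s' : ℝ≥0∞) hs' => ?_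
  have hs't : s' < t := hs'.trans_le (hrs ▸ le_add_self)
  have hr : r ≤ t - s' :=
    ENNReal.le_sub_of_add_le_right hs't.ne_top (hrs ▸ add_le_add_right hs'.le r)
  exact (T.monotone_mul_left _ (hψ hr)).trans (le_iSup₂_of_le s' hs't le_rfl)

lemma le_conv_lower (hψ : DistDistr ψ) :
    ⨆ (s) (_ : s < t), T.mul (ψ (t - s)) (G s) ≤ conv T ψ (lower G) t := by
  refine iSup₂_le fun s hst => ?_
  rw [hψ (t - s), T.comm]
  simp only [T.mul_iSup]
  refine iSup₂_le fun (u : ℝ≥0∞) hu => ?_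
  have hut : u + s < t := lt_tsub_iff_right.mp hu
  have hs : s < t - u := lt_tsub_iff_left.mpr hut
  have hsum : u + (t - u) = t := add_tsub_cancel_of_le (le_self_add.trans hut.le)
  calc T.mul (G s) (ψ u) = T.mul (ψ u) (G s) := T.comm _ _
    _ ≤ T.mul (ψ u) (lower G (t - u)) :=
        T.mono _ (le_iSup₂_of_le (f := fun (i : ℝ≥0∞) (_ : i < t - u) => G i) s hs le_rfl)
    _ ≤ conv T ψ (lower G) t := le_iSup₂_of_le u (t - u) (le_iSup_of_le hsum le_rfl)

lemma conv_lower_apply (hψ : DistDistr ψ) :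
    conv T ψ (lower G) t = ⨆ (s) (_ : s < t), T.mul (ψ (t - s)) (G s) :=
  (conv_lower_le T G t hψ.monotone).antisymm (le_conv_lower T G t hψ)

end conv_lower

theorem stmt_13_general (T : ContinuousTNorm) (φ ψ ξ : ℝ≥0∞ → I)
    (hψ : DistDistr ψ) :
    ∀ t : ℝ≥0∞, t ≠ ∞ →
      conv T ψ (fun u => ⨆ (s : ℝ≥0∞) (_ : s < u), ⨅ (q : ℝ≥0∞) (_ : 0 < q),
          T.residual (φ q) (ξ (q + s))) t
        = ⨆ (s : ℝ≥0∞) (_ : s < t), ⨅ (q : ℝ≥0∞) (_ : 0 < q),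
            T.mul (ψ (t - s)) (T.residual (φ q) (ξ (q + s))) := by
  intro t _
  simp only [← T.mul_iInf₂ (p := fun q : ℝ≥0∞ => 0 < q) ⟨1, one_pos⟩]
  exact conv_lower_apply T _ t hψ

/-- for distance distributions `φ, ψ, ξ` and finite `t`,
`(ψ ⊗ (φ ⇒ ξ)) t = ⨆ s < t, ⨅ q > 0, ψ (t - s) * (φ q →* ξ (q + s))`. -/
theorem stmt_13 (T : ContinuousTNorm) (φ ψ ξ : ℝ≥0∞ → I)
    (hφ : DistDistr φ) (hψ : DistDistr ψ) (hξ : DistDistr ξ) :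
    ∀ t : ℝ≥0∞, t ≠ ∞ →
      conv T ψ (fun u => ⨆ (s : ℝ≥0∞) (_ : s < u), ⨅ (q : ℝ≥0∞) (_ : 0 < q),
          T.residual (φ q) (ξ (q + s))) t
        = ⨆ (s : ℝ≥0∞) (_ : s < t), ⨅ (q : ℝ≥0∞) (_ : 0 < q),
            T.mul (ψ (t - s)) (T.residual (φ q) (ξ (q + s))) :=
  stmt_13_general T φ ψ ξ hψ
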